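/- Let H be a Hopf *-algebra and B a unital *-algebra with H-coaction α and H-action ▷ satisfying the Yetter–Drinfeld condition. Then for any finite-dimensional unitary corepresentation U, the map β_U(a) = Σᵢⱼ (uᵢⱼ ▷ a) ⊗ mᵢⱼ satisfies the covariance relation (α ⊗ ι)β_U(a) = U₃₁ ((ι ⊗ β_U)α(a)) U₃₁* in H ⊗ B ⊗ Mₙ. -/
import Mathlib


open TensorProduct LinearMap

noncomputable section

variable (k H B : Type) [Field k]
variable [Ring H] [HopfAlgebra k H] [Ring B] [Algebra k B]

/-- The lifted action map `H ⊗ B → B`. -/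
def actT (act : H →ₗ[k] B →ₗ[k] B) : H ⊗[k] B →ₗ[k] B := TensorProduct.lift act

/-- `(Δ x) ⊗ (a ⊗ b) ↦ (x₍₁₎ ▷ a)(x₍₂₎ ▷ b)`. -/
def maMap (act : H →ₗ[k] B →ₗ[k] B) : (H ⊗[k] H) ⊗[k] (B ⊗[k] B) →ₗ[k] B :=
  (LinearMap.mul' k B) ∘ₗ (TensorProduct.map (actT k H B act) (actT k H B act)) ∘ₗ
    (TensorProduct.tensorTensorTensorComm k H H B B).toLinearMap

/-- `a ⊗ b ↦ b₍₂₎ (S⁻¹(b₍₁₎) ▷ a)`. -/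
def braid (act : H →ₗ[k] B →ₗ[k] B) (Sinv : H →ₗ[k] H) (coact : B →ₗ[k] H ⊗[k] B) :
    B ⊗[k] B →ₗ[k] B :=
  (LinearMap.mul' k B) ∘ₗ (TensorProduct.comm k B B).toLinearMap
    ∘ₗ (TensorProduct.map (actT k H B act) LinearMap.id)
    ∘ₗ (TensorProduct.map (TensorProduct.map Sinv LinearMap.id) LinearMap.id)
    ∘ₗ (TensorProduct.map (TensorProduct.comm k B H).toLinearMap LinearMap.id)
    ∘ₗ (TensorProduct.assoc k B H B).symm.toLinearMap
    ∘ₗ (TensorProduct.map LinearMap.id coact)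

/-- `x ↦ x₍₁₎ ⊗ (x₍₂₎ ⊗ x₍₃₎)`. -/
def comul₂ : H →ₗ[k] H ⊗[k] (H ⊗[k] H) :=
  (TensorProduct.map LinearMap.id Coalgebra.comul) ∘ₗ Coalgebra.comul

/-- `(x₍₂₎ ⊗ x₍₃₎) ⊗ a₍₂₎ ↦ S(x₍₃₎) ⊗ (x₍₂₎ ▷ a₍₂₎)`. -/
def innerYD (act : H →ₗ[k] B →ₗ[k] B) : (H ⊗[k] H) ⊗[k] B →ₗ[k] H ⊗[k] B :=
  (TensorProduct.map (HopfAlgebra.antipode (R := k)) (actT k H B act))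
    ∘ₗ (TensorProduct.assoc k H H B).toLinearMap
    ∘ₗ (TensorProduct.map (TensorProduct.comm k H H).toLinearMap LinearMap.id)

/-- `x ⊗ a ↦ x₍₁₎ a₍₁₎ S(x₍₃₎) ⊗ (x₍₂₎ ▷ a₍₂₎)`, the right-hand side of the
Yetter–Drinfeld compatibility condition. -/
def rhsYD (act : H →ₗ[k] B →ₗ[k] B) (coact : B →ₗ[k] H ⊗[k] B) :
    H ⊗[k] B →ₗ[k] H ⊗[k] B :=
  (TensorProduct.map (LinearMap.mul' k H) LinearMap.id)
    ∘ₗ (TensorProduct.assoc k H H B).symm.toLinearMap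
    ∘ₗ (TensorProduct.map (LinearMap.mul' k H) (innerYD k H B act))
    ∘ₗ (TensorProduct.tensorTensorTensorComm k H (H ⊗[k] H) H B).toLinearMap
    ∘ₗ (TensorProduct.map (comul₂ k H) coact)

variable {k H B} in
/-- A braided-commutative Yetter–Drinfeld algebra structure on `B` over the Hopf
algebra `H` (with invertible antipode `Sinv`): `B` is a left `H`-module algebra
(action `act`), a left `H`-comodule algebra (coaction `coact`), the Yetter–Drinfeld
compatibility holds, and braided commutativity `a b = b₍₂₎ (S⁻¹(b₍₁₎) ▷ a)` holds. -/
structure BraidedCommYD (act : H →ₗ[k] B →ₗ[k] B) (coact : B →ₗ[k] H ⊗[k] B)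
    (Sinv : H →ₗ[k] H) : Prop where
  Sinv_antipode : ∀ x : H, Sinv (HopfAlgebra.antipode (R := k) x) = x
  antipode_Sinv : ∀ x : H, HopfAlgebra.antipode (R := k) (Sinv x) = x
  act_unit : ∀ a : B, act 1 a = a
  act_mulH : ∀ (x y : H) (a : B), act (x * y) a = act x (act y a)
  act_one : ∀ x : H, act x 1 = Coalgebra.counit (R := k) x • (1 : B)
  act_mul : ∀ (x : H) (a b : B),
    act x (a * b) = maMap k H B act (Coalgebra.comul x ⊗ₜ[k] (a ⊗ₜ[k] b))
  coact_one : coact 1 = 1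
  coact_mul : ∀ a b : B, coact (a * b) = coact a * coact b
  coact_coassoc : ∀ a : B,
    (TensorProduct.map Coalgebra.comul LinearMap.id) (coact a)
      = (TensorProduct.assoc k H H B).symm ((TensorProduct.map LinearMap.id coact) (coact a))
  coact_counit : ∀ a : B,
    (TensorProduct.lid k B) ((TensorProduct.map (Coalgebra.counit (R := k)) LinearMap.id) (coact a)) = a
  yd : ∀ (x : H) (a : B), coact (act x a) = rhsYD k H B act coact (x ⊗ₜ[k] a)
  braided : ∀ a b : B, a * b = braid k H B act Sinv coact (a ⊗ₜ[k] b)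

set_option maxHeartbeats 1000000 in
set_option synthInstance.maxHeartbeats 200000 in
/-- Let `H` be a Hopf `*`-algebra and `B` a unital algebra with
`H`-coaction `α` and `H`-action `▷` satisfying the Yetter–Drinfeld condition.  For a
finite-dimensional unitary corepresentation `U = Σ mᵢⱼ ⊗ uᵢⱼ`, the map
`β_U(a) = Σᵢⱼ (uᵢⱼ ▷ a) ⊗ mᵢⱼ` satisfies the covariance relation
`(α ⊗ ι)β_U(a) = U₃₁ ((ι ⊗ β_U)α(a)) U₃₁*` in `H ⊗ B ⊗ Mₙ`; entrywise this reads
`α(uᵢⱼ ▷ a) = Σₚ,q (uᵢₚ ⊗ 1) ((ι ⊗ (uₚq ▷ ·))α(a)) (u_{jq}* ⊗ 1)`. -/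
theorem betaU_covariance
    [StarRing H] {n : ℕ}
    (act : H →ₗ[k] B →ₗ[k] B) (coact : B →ₗ[k] H ⊗[k] B)
    -- module algebra
    (act_unit : ∀ a : B, act 1 a = a)
    (act_mulH : ∀ (x y : H) (a : B), act (x * y) a = act x (act y a))
    (act_one : ∀ x : H, act x 1 = Coalgebra.counit (R := k) x • (1 : B))
    (act_mul : ∀ (x : H) (a b : B),
      act x (a * b) = maMap k H B act (Coalgebra.comul x ⊗ₜ[k] (a ⊗ₜ[k] b)))
    -- comodule algebra
    (coact_one : coact 1 = 1)
    (coact_mul : ∀ a b : B, coact (a * b) = coact a * coact b)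
    (coact_coassoc : ∀ a : B,
      (TensorProduct.map Coalgebra.comul LinearMap.id) (coact a)
        = (TensorProduct.assoc k H H B).symm ((TensorProduct.map LinearMap.id coact) (coact a)))
    (coact_counit : ∀ a : B,
      (TensorProduct.lid k B)
        ((TensorProduct.map (Coalgebra.counit (R := k)) LinearMap.id) (coact a)) = a)
    -- the Yetter–Drinfeld condition
    (yd : ∀ (x : H) (a : B), coact (act x a) = rhsYD k H B act coact (x ⊗ₜ[k] a))
    -- `u` is a unitary corepresentation with `S(uᵢⱼ) = uⱼᵢ*`
    (u : Matrix (Fin n) (Fin n) H)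
    (hcomul : ∀ i j, Coalgebra.comul (R := k) (u i j) = ∑ l, u i l ⊗ₜ[k] u l j)
    (hcounit : ∀ i j, Coalgebra.counit (R := k) (u i j) = if i = j then 1 else 0)
    (hunitary₁ : ∀ i j, ∑ l, star (u l i) * u l j = if i = j then (1 : H) else 0)
    (hunitary₂ : ∀ i j, ∑ l, u i l * star (u j l) = if i = j then (1 : H) else 0)
    (hantipode : ∀ i j, HopfAlgebra.antipode (R := k) (u i j) = star (u j i)) :
    ∀ (i j : Fin n) (a : B),
      coact (act (u i j) a)
        = ∑ p, ∑ q,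
            (TensorProduct.map
              ((LinearMap.mulLeft k (u i p)).comp (LinearMap.mulRight k (star (u j q))))
              (act (u p q)))
            (coact a) := by

  intro i j a
  rw [yd]
  have hcomul₂ : comul₂ k H (u i j) = ∑ p, ∑ q, u i p ⊗ₜ[k] (u p q ⊗ₜ[k] u q j) := by
    simp only [comul₂, LinearMap.coe_comp, Function.comp_apply, hcomul, map_sum,
      TensorProduct.map_tmul, LinearMap.id_coe, id_eq, TensorProduct.tmul_sum]
  have key : ∀ t : H ⊗[k] B,
      rhsYD k H B act coact (u i j ⊗ₜ[k] a)
        = (TensorProduct.map (LinearMap.mul' k H) LinearMap.id)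
            ((TensorProduct.assoc k H H B).symm
              ((TensorProduct.map (LinearMap.mul' k H) (innerYD k H B act))
                ((TensorProduct.tensorTensorTensorComm k H (H ⊗[k] H) H B)
                  ((∑ p, ∑ q, u i p ⊗ₜ[k] (u p q ⊗ₜ[k] u q j)) ⊗ₜ[k] coact a)))) := by
    intro t
    simp only [rhsYD, LinearMap.coe_comp, Function.comp_apply, TensorProduct.map_tmul,
      hcomul₂, LinearEquiv.coe_coe]
  rw [key (coact a)]
  rw [show ∀ (x : H ⊗[k] (H ⊗[k] H)) (t : H ⊗[k] B), x ⊗ₜ[k] t = x ⊗ₜ[k] t from fun _ _ => rfl]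
  have main : ∀ t : H ⊗[k] B,
      (TensorProduct.map (LinearMap.mul' k H) LinearMap.id)
            ((TensorProduct.assoc k H H B).symm
              ((TensorProduct.map (LinearMap.mul' k H) (innerYD k H B act))
                ((TensorProduct.tensorTensorTensorComm k H (H ⊗[k] H) H B)
                  ((∑ p, ∑ q, u i p ⊗ₜ[k] (u p q ⊗ₜ[k] u q j)) ⊗ₜ[k] t))))
        = ∑ p, ∑ q,
            (TensorProduct.map
              ((LinearMap.mulLeft k (u i p)).comp (LinearMap.mulRight k (star (u j q))))
              (act (u p q))) t := by
    intro t
    induction t using TensorProduct.induction_on with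
    | zero => simp
    | tmul h b =>
      simp only [TensorProduct.sum_tmul, map_sum,
        TensorProduct.tensorTensorTensorComm_tmul, TensorProduct.map_tmul,
        innerYD, actT, LinearMap.coe_comp, Function.comp_apply, LinearEquiv.coe_coe,
        TensorProduct.comm_tmul, TensorProduct.assoc_tmul, TensorProduct.assoc_symm_tmul,
        LinearMap.id_coe, id_eq, LinearMap.mul'_apply, TensorProduct.lift.tmul,
        hantipode, LinearMap.mulLeft_apply, LinearMap.mulRight_apply, mul_assoc]
    | add x y hx hy =>
      simp only [TensorProduct.tmul_add, map_add, hx, hy, Finset.sum_add_distrib]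
  rw [main (coact a)]
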